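/- arXiv:2512.04402 — 4 statements merged into one kernel-verified Lean document; each statement's English description precedes it below -/
import Mathlib

section
/- Let G be a connected graph on at least n vertices with minimum degree δ(G) ≥ n−2. If T is any tree on n vertices that is not the star K_{1,n−1}, then T embeds into G. -/
open SimpleGraph
open scoped Classical

/-- `H` embeds into `G`: there is an injective graph homomorphism from `H` to `G`. -/
def Copies {α : Type*} {β : Type*} (H : SimpleGraph α) (G : SimpleGraph β) : Prop :=
  ∃ f : α → β, Function.Injective f ∧ ∀ ⦃a b : α⦄, H.Adj a b → G.Adj (f a) (f b)

/-- the star `K_{1,ℓ}` with `ℓ` leaves and center `0`. -/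
def starGraph (ℓ : ℕ) : SimpleGraph (Fin (ℓ + 1)) :=
  SimpleGraph.fromRel (fun a _ => a = 0)

/-- the graph of color `i` for a symmetric edge-coloring `c`. -/
def colorGraph {N k : ℕ} (c : Fin N → Fin N → Fin k) (i : Fin k) : SimpleGraph (Fin N) :=
  SimpleGraph.fromRel (fun a b => c a b = i)

/-- `K_N → (G₁, G₂)`: every red-blue coloring of `E(K_N)` yields a red `G₁` or a blue `G₂`. -/
def RamseyProp2 {α β : Type*} (N : ℕ) (G₁ : SimpleGraph α) (G₂ : SimpleGraph β) : Prop :=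
  ∀ R : SimpleGraph (Fin N), Copies G₁ R ∨ Copies G₂ Rᶜ

/-- the 2-color Ramsey number `r(G₁, G₂)`. -/
noncomputable def ramsey2 {α β : Type*} (G₁ : SimpleGraph α) (G₂ : SimpleGraph β) : ℕ :=
  sInf {N | RamseyProp2 N G₁ G₂}

/-- `K_N → (G₁, G₂, G₃)` for 3-colorings. -/
def RamseyProp3 {α β γ : Type*} (N : ℕ) (G₁ : SimpleGraph α) (G₂ : SimpleGraph β)
    (G₃ : SimpleGraph γ) : Prop :=
  ∀ c : Fin N → Fin N → Fin 3, (∀ a b, c a b = c b a) →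
    Copies G₁ (colorGraph c 0) ∨ Copies G₂ (colorGraph c 1) ∨ Copies G₃ (colorGraph c 2)

/-- the 3-color Ramsey number `r(G₁, G₂, G₃)`. -/
noncomputable def ramsey3 {α β γ : Type*} (G₁ : SimpleGraph α) (G₂ : SimpleGraph β)
    (G₃ : SimpleGraph γ) : ℕ :=
  sInf {N | RamseyProp3 N G₁ G₂ G₃}

/-- the chromatic number as a natural number. -/
noncomputable def chrom {β : Type*} (H : SimpleGraph β) : ℕ :=
  sInf {k | H.Colorable k}

/-- the surplus `s(H)`: the minimum size of a color class over proper colorings of `H`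
with `chrom H` colors. -/
noncomputable def surplus {β : Type*} [Fintype β] (H : SimpleGraph β) : ℕ :=
  sInf {s | ∃ C : H.Coloring (Fin (chrom H)), ∃ i : Fin (chrom H),
    s = (Finset.univ.filter (fun v => C v = i)).card}

/-!
Remove a leaf `y` of `T`, attached to `q`. Since `T` is not a star, some path `q r s` avoids `y`.
The tree `T - y` has `n - 1` vertices and `δ(G) ≥ n - 2`, so an embedding of any connected part
of it extends greedily: a new vertex has exactly one embedded neighbour (acyclicity), and the
image of that neighbour has at most `n - 3` neighbours among the other embedded vertices, hence a
free one. To place `y` at the end, the image of `q` must keep a neighbour outside the final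
image. If some vertex of `G` has degree `≥ n - 1`, send `q` there. Otherwise `G` is not complete
(it has at least `n` vertices), so, being connected, it contains an induced path `v c o`; send
`q r s` onto it. The final image then contains `v` and its non-neighbour `o`, hence at most
`n - 3` of the `≥ n - 2` neighbours of `v`.
-/

namespace SimpleGraph

variable {α β : Type*} {T : SimpleGraph α} {G : SimpleGraph β}

lemma Preconnected.isUniversal_of_forall_adj_adj {q : α} (hT : T.Preconnected)
    (h : ∀ ⦃r s⦄, T.Adj q r → T.Adj r s → s = q ∨ T.Adj q s) : T.IsUniversal q := by
  have key : ∀ {u} (p : T.Walk u q), u = q ∨ T.Adj q u := by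
    intro u p
    induction p with
    | nil => exact Or.inl rfl
    | cons hadj p ih =>
      rcases ih h with rfl | hq
      · exact Or.inr hadj.symm
      · exact h hq hadj.symm
  intro w hw
  exact (key (hT w q).some).resolve_left (Ne.symm hw)

lemma Preconnected.eq_top_or_exists_induced_path (hG : G.Preconnected) :
    G = ⊤ ∨ ∃ v c o, G.Adj v c ∧ G.Adj c o ∧ o ≠ v ∧ ¬ G.Adj v o := by
  refine or_iff_not_imp_right.mpr fun h => eq_top_iff_forall_isUniversal.mpr fun v =>
    hG.isUniversal_of_forall_adj_adj fun c o hvc hco => ?_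
  push Not at h
  exact or_iff_not_imp_left.mpr (h v c o hvc hco)

lemma IsAcyclic.not_adj_of_adj_of_adj (hT : T.IsAcyclic) {a b c : α} (hab : T.Adj a b)
    (hbc : T.Adj b c) : ¬ T.Adj a c := by
  classical
  exact fun hac => hT.cliqueFree le_rfl {a, b, c} (is3Clique_triple_iff.mpr ⟨hab, hac, hbc⟩)

lemma IsAcyclic.eq_starGraph_of_isUniversal {c : α} (hT : T.IsAcyclic) (hc : T.IsUniversal c) :
    T = starGraph c := by
  ext a b
  rw [starGraph_adj]
  refine ⟨fun hab => ⟨hab.ne, ?_⟩, ?_⟩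
  · by_contra! h
    exact hT.not_adj_of_adj_of_adj (hc (Ne.symm h.1)) hab (hc (Ne.symm h.2))
  · rintro ⟨hab, rfl | rfl⟩
    · exact hc hab
    · exact (hc hab.symm).symm

lemma IsTree.exists_isUniversal_or_leaf_path [Fintype α] [DecidableRel T.Adj] (hT : T.IsTree) :
    (∃ c, T.IsUniversal c) ∨ ∃ y q r s, (∀ w, T.Adj y w ↔ w = q) ∧ T.Adj q r ∧ T.Adj r s ∧
      s ≠ q ∧ y ∉ ({q, r, s} : Set α) := by
  cases subsingleton_or_nontrivial α
  · obtain ⟨c⟩ := hT.connected.nonempty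
    exact Or.inl ⟨c, IsUniversal.of_subsingleton⟩
  obtain ⟨y, hy⟩ := hT.exists_vert_degree_one_of_nontrivial
  obtain ⟨q, hyq, hq⟩ := degree_eq_one_iff_existsUnique_adj.mp hy
  by_cases h : ∃ r s, T.Adj q r ∧ T.Adj r s ∧ s ≠ q
  · obtain ⟨r, s, hqr, hrs, hsq⟩ := h
    refine Or.inr ⟨y, q, r, s, fun w => ⟨hq w, by rintro rfl; exact hyq⟩, hqr, hrs, hsq, ?_⟩
    rintro (rfl | rfl | rfl)
    · exact hyq.ne rfl
    · exact hsq (hq s hrs)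
    · exact hqr.ne (hq r hrs.symm).symm
  · push Not at h
    exact Or.inl ⟨q, hT.connected.preconnected.isUniversal_of_forall_adj_adj
      fun r s hqr hrs => Or.inl (h r s hqr hrs)⟩

lemma nonempty_starGraph_iso_starGraph {n : ℕ} (c : Fin n) :
    Nonempty (starGraph c ≃g _root_.starGraph (n - 1)) := by
  have hn : n = n - 1 + 1 := by have := c.pos; omega
  let e : Fin n ≃ Fin (n - 1 + 1) := (finCongr hn).trans (Equiv.swap (finCongr hn c) 0)
  have he : ∀ a, e a = 0 ↔ a = c := by
    intro a
    simp [e, Equiv.swap_apply_eq_iff]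
  exact ⟨⟨e, fun {a b} => by simp [_root_.starGraph, he, e.injective.eq_iff]⟩⟩

lemma Connected.induce_insert {s : Set α} {a x : α} (hs : (T.induce s).Connected) (ha : a ∈ s)
    (hax : T.Adj a x) : (T.induce (insert x s)).Connected := by
  have := induce_union_connected (induce_pair_connected_of_adj hax).preconnected hs.preconnected
    ⟨a, by simp, ha⟩
  rwa [show ({a, x} ∪ s : Set α) = insert x s by ext; aesop] at this

lemma Preconnected.exists_boundary_adj_of_induce {S A : Set α} (hS : (T.induce S).Preconnected)
    (hAS : A ⊆ S) {a x : α} (ha : a ∈ A) (hx : x ∈ S) (hxA : x ∉ A) :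
    ∃ b ∈ A, ∃ y ∈ S, y ∉ A ∧ T.Adj b y := by
  obtain ⟨p⟩ := hS ⟨a, hAS ha⟩ ⟨x, hx⟩
  obtain ⟨d, -, hd₁, hd₂⟩ := p.exists_boundary_dart {z | z.1 ∈ A} ha hxA
  exact ⟨d.fst, hd₁, d.snd, d.snd.2, hd₂, d.adj⟩

lemma IsAcyclic.eq_of_adj_of_induce_preconnected (hT : T.IsAcyclic) {A : Set α}
    (hA : (T.induce A).Preconnected) {x a b : α} (hx : x ∉ A) (ha : a ∈ A) (hb : b ∈ A)
    (hxa : T.Adj x a) (hxb : T.Adj x b) : a = b := by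
  classical
  by_contra hab
  obtain ⟨p⟩ := hA ⟨a, ha⟩ ⟨b, hb⟩
  let q : T.Walk a b := (p.map (Embedding.induce A).toHom).bypass
  have hxq : x ∉ q.support := fun h => by
    obtain ⟨z, -, rfl⟩ :=
      List.mem_map.mp (Walk.support_map _ p ▸ Walk.support_bypass_subset_support _ h)
    exact hx z.2
  refine hxq (hT.mem_support_of_ne_mem_support_of_adj_of_isPath (Walk.bypass_isPath _)
    (Path.singleton hxa.symm).2 hxb.symm ?_)
  have hbx : b ≠ x := fun h => hx (h ▸ hb)
  simp [Path.singleton, Ne.symm hab, hbx]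

lemma exists_adj_notMem_of_card_lt [DecidableEq β] {v : β} [Fintype (G.neighborSet v)]
    {B C : Finset β} (hCB : C ⊆ B) (hC : ∀ c ∈ C, ¬ G.Adj v c)
    (hB : B.card < G.degree v + C.card) : ∃ u, G.Adj v u ∧ u ∉ B := by
  by_contra! h
  have hsub : G.neighborFinset v ∪ C ⊆ B :=
    Finset.union_subset (fun u hu => h u ((G.mem_neighborFinset v u).mp hu)) hCB
  have hdisj : Disjoint (G.neighborFinset v) C :=
    Finset.disjoint_left.mpr fun u hu huC => hC u huC ((G.mem_neighborFinset v u).mp hu)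
  have := Finset.card_le_card hsub
  rw [Finset.card_union_of_disjoint hdisj, card_neighborFinset_eq_degree] at this
  omega

structure IsPartialEmbedding (T : SimpleGraph α) (G : SimpleGraph β) (A : Set α) (f : α → β) :
    Prop where
  injOn : Set.InjOn f A
  map_adj : ∀ ⦃a⦄, a ∈ A → ∀ ⦃b⦄, b ∈ A → T.Adj a b → G.Adj (f a) (f b)

namespace IsPartialEmbedding

lemma singleton (a : α) (f : α → β) : IsPartialEmbedding T G {a} f :=
  ⟨Set.injOn_singleton f a, by rintro _ rfl _ rfl h; exact absurd h (T.loopless.irrefl _)⟩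

lemma update [DecidableEq α] {A : Set α} {f : α → β} {a x : α} {u : β}
    (hf : IsPartialEmbedding T G A f) (hx : x ∉ A)
    (hattach : ∀ b ∈ A, T.Adj x b → b = a) (hu : G.Adj (f a) u) (hfresh : ∀ b ∈ A, f b ≠ u) :
    IsPartialEmbedding T G (insert x A) (Function.update f x u) := by
  have heq : Set.EqOn (Function.update f x u) f A := fun b hb =>
    Function.update_of_ne (ne_of_mem_of_not_mem hb hx) _ _
  have hx_adj : ∀ b ∈ A, T.Adj x b → G.Adj u (Function.update f x u b) := by
    intro b hb hxb
    rw [heq hb, hattach b hb hxb]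
    exact hu.symm
  refine ⟨?_, ?_⟩
  · rw [Set.injOn_insert hx]
    refine ⟨hf.injOn.congr heq.symm, ?_⟩
    rintro ⟨b, hb, hbu⟩
    rw [heq hb, Function.update_self] at hbu
    exact hfresh b hb hbu
  · rintro c (rfl | hc) d (rfl | hd) hcd
    · exact absurd hcd (T.loopless.irrefl _)
    · simpa using hx_adj d hd hcd
    · simpa using (hx_adj c hc hcd.symm).symm
    · rw [heq hc, heq hd]
      exact hf.map_adj hc hd hcd

lemma update_update_const [DecidableEq α] {q r s : α} {v c o : β} (hqr : T.Adj q r)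
    (hrs : T.Adj r s) (hsq : s ≠ q) (hqs : ¬ T.Adj q s) (hvc : G.Adj v c) (hco : G.Adj c o)
    (hov : o ≠ v) :
    IsPartialEmbedding T G (insert s (insert r {q}))
      (Function.update (Function.update (fun _ => v) r c) s o) := by
  have hqr' : IsPartialEmbedding T G (insert r {q}) (Function.update (fun _ => v) r c) :=
    (singleton q _).update (a := q) (by simpa using hqr.ne') (by simp) hvc (by simpa using hvc.ne)
  refine hqr'.update (a := r) (by simp [hrs.ne', hsq]) ?_ (by simpa [hqr.ne] using hco) ?_
  · rintro b (rfl | rfl) hsb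
    · rfl
    · exact absurd hsb.symm hqs
  · rintro b (rfl | rfl)
    · simpa using hco.ne
    · simpa [hqr.ne] using hov.symm

theorem exists_extension [DecidableEq α] [DecidableEq β] [G.LocallyFinite] (hT : T.IsAcyclic)
    {A S : Finset α} {f : α → β} (hf : IsPartialEmbedding T G A f)
    (hA : (T.induce (A : Set α)).Connected) (hAS : A ⊆ S)
    (hS : (T.induce (S : Set α)).Preconnected) (hdeg : ∀ v, S.card - 1 ≤ G.degree v) :
    ∃ g, IsPartialEmbedding T G S g ∧ Set.EqOn g f A := by
  by_cases hSA : S ⊆ A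
  · exact ⟨f, (Finset.Subset.antisymm hAS hSA) ▸ hf, Set.eqOn_refl f A⟩
  obtain ⟨x, hxS, hxA⟩ := Finset.not_subset.mp hSA
  obtain ⟨⟨a₀, ha₀⟩⟩ := hA.nonempty
  obtain ⟨a, ha, y, hyS, hyA, hay⟩ :=
    hS.exists_boundary_adj_of_induce (Finset.coe_subset.mpr hAS) ha₀ hxS hxA
  have hAcard : A.card < S.card := Finset.card_lt_card ⟨hAS, hSA⟩
  obtain ⟨u, hu, huA⟩ := exists_adj_notMem_of_card_lt (G := G) (v := f a) (B := A.image f)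
    (C := {f a}) (by simpa using Finset.mem_image_of_mem f ha) (by simp)
    (by have := Finset.card_image_le (s := A) (f := f); have := hdeg (f a); simp; omega)
  have hf' := hf.update hyA (fun b hb hyb =>
      (hT.eq_of_adj_of_induce_preconnected hA.preconnected hyA ha hb hay.symm hyb).symm)
    hu (fun b hb hbu => huA (hbu ▸ Finset.mem_image_of_mem f hb))
  have hA' := hA.induce_insert ha hay
  rw [← Finset.coe_insert] at hf' hA'
  obtain ⟨g, hg, hgf⟩ := hf'.exists_extension hT hA' (Finset.insert_subset hyS hAS) hS hdeg
  refine ⟨g, hg, fun b hb => ?_⟩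
  rw [hgf (Finset.mem_insert_of_mem hb)]
  exact Function.update_of_ne (ne_of_mem_of_not_mem hb hyA) _ _
termination_by S.card - A.card
decreasing_by
  rw [Finset.card_insert_of_notMem hyA]
  omega

lemma copies_of_adj_leaf [Fintype α] [DecidableEq α] {y q : α} {g : α → β} {u : β}
    (hg : IsPartialEmbedding T G ↑(Finset.univ.erase y) g) (hy : ∀ w, T.Adj y w ↔ w = q)
    (hu : G.Adj (g q) u) (hgu : ∀ b ≠ y, g b ≠ u) : Copies T G := by
  have hfull := hg.update (by simp) (fun b _ hyb => (hy b).mp hyb) hu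
    (fun b hb => hgu b (Finset.ne_of_mem_erase hb))
  rw [← Finset.coe_insert, Finset.insert_erase (Finset.mem_univ y), Finset.coe_univ] at hfull
  exact ⟨_, Set.injOn_univ.mp hfull.injOn, fun _ _ h => hfull.map_adj trivial trivial h⟩

end IsPartialEmbedding

/-- A starting partial embedding around `q` after which the leaf at `q` can always be placed. -/
lemma exists_partialEmbedding_spare_adj [DecidableEq α] [Fintype β] [DecidableEq β]
    [DecidableRel G.Adj] (hG : G.Connected) {n : ℕ} (hn : n ≤ Fintype.card β)
    (hdeg : ∀ v, n - 2 ≤ G.degree v) {q r s : α} (hqr : T.Adj q r) (hrs : T.Adj r s)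
    (hsq : s ≠ q) (hqs : ¬ T.Adj q s) :
    ∃ A : Finset α, A ⊆ {q, r, s} ∧ q ∈ A ∧ (T.induce (A : Set α)).Connected ∧
      ∃ f, IsPartialEmbedding T G A f ∧
        ∀ B : Finset β, A.image f ⊆ B → B.card < n → ∃ u, G.Adj (f q) u ∧ u ∉ B := by
  have hq : (T.induce (({q} : Finset α) : Set α)).Connected := by
    rw [Finset.coe_singleton]
    exact Connected.of_subsingleton
  by_cases hbig : ∃ v, n - 1 ≤ G.degree v
  · obtain ⟨v, hv⟩ := hbig
    refine ⟨{q}, by simp, by simp, hq, fun _ => v, by simpa using .singleton q _,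
      fun B hB hBn => ?_⟩
    exact exists_adj_notMem_of_card_lt (C := {v}) (by simpa using hB) (by simp) (by simp; omega)
  obtain ⟨v, c, o, hvc, hco, hov, hvo⟩ :=
    hG.preconnected.eq_top_or_exists_induced_path.resolve_left fun htop => by
      obtain ⟨w⟩ := hG.nonempty
      refine hbig ⟨w, ?_⟩
      rw [(G.degree_eq_card_sub_one w).mpr (eq_top_iff_forall_isUniversal.mp htop w)]
      omega
  set f := Function.update (Function.update (fun _ => v) r c) s o
  have hfq : f q = v := by simp [f, hsq.symm, hqr.ne]
  refine ⟨{s, r, q}, by intro; simp; tauto, by simp, ?_, f,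
    by simpa using IsPartialEmbedding.update_update_const hqr hrs hsq hqs hvc hco hov,
    fun B hB hBn => ?_⟩
  · rw [Finset.coe_insert, Finset.coe_insert]
    exact (hq.induce_insert (by simp) hqr).induce_insert (by simp) hrs
  · have hB' : ∀ t ∈ ({s, r, q} : Finset α), f t ∈ B := fun t ht =>
      hB (Finset.mem_image_of_mem f ht)
    rw [hfq]
    refine exists_adj_notMem_of_card_lt (C := {v, o}) ?_ (by simp [hvo]) ?_
    · exact Finset.insert_subset_iff.mpr ⟨hfq ▸ hB' q (by simp),
        Finset.singleton_subset_iff.mpr (by simpa [f] using hB' s (by simp))⟩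
    · have := hdeg v
      rw [Finset.card_pair hov.symm]
      omega

end SimpleGraph

theorem stmt2 {V : Type*} [Fintype V] (n : ℕ) (G : SimpleGraph V)
    (hconn : G.Connected) (hcard : n ≤ Fintype.card V) (hδ : n - 2 ≤ G.minDegree)
    (T : SimpleGraph (Fin n)) (hT : T.IsTree)
    (hstar : ¬ Nonempty (T ≃g _root_.starGraph (n - 1))) :
    Copies T G := by
  rcases hT.exists_isUniversal_or_leaf_path with ⟨c, hc⟩ | ⟨y, q, r, s, hy, hqr, hrs, hsq, hyqrs⟩
  · rw [hT.isAcyclic.eq_starGraph_of_isUniversal hc] at hstar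
    exact absurd (nonempty_starGraph_iso_starGraph c) hstar
  set S : Finset (Fin n) := Finset.univ.erase y
  have hS : (T.induce (S : Set (Fin n))).Connected := by
    rw [Finset.coe_erase, Finset.coe_univ, ← Set.compl_eq_univ_sdiff]
    exact hT.connected.induce_compl_singleton_of_degree_eq_one
      (degree_eq_one_iff_existsUnique_adj.mpr ⟨q, (hy q).mpr rfl, fun w => (hy w).mp⟩)
  have hqrs : ({q, r, s} : Finset (Fin n)) ⊆ S := fun t ht =>
    Finset.mem_erase.mpr ⟨fun hty => hyqrs (hty ▸ by simpa using ht), Finset.mem_univ t⟩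
  have hdeg : ∀ v, n - 2 ≤ G.degree v := fun v => hδ.trans (G.minDegree_le_degree v)
  obtain ⟨A, hA, hqA, hAconn, f, hf, hspare⟩ := exists_partialEmbedding_spare_adj hconn hcard
    hdeg hqr hrs hsq (hT.isAcyclic.not_adj_of_adj_of_adj hqr hrs)
  obtain ⟨g, hg, hgf⟩ := hf.exists_extension hT.isAcyclic hAconn (hA.trans hqrs) hS.preconnected
    (fun v => by have := hdeg v; simp [S]; omega)
  obtain ⟨u, hu, huS⟩ := hspare (S.image g)
    (by rw [← Finset.image_congr hgf]; exact Finset.image_subset_image (hA.trans hqrs))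
    (Finset.card_image_le.trans_lt (by have := y.pos; simp [S]; omega))
  rw [← hgf hqA] at hu
  exact hg.copies_of_adj_leaf hy hu fun b hb hbu =>
    huS (hbu ▸ Finset.mem_image_of_mem g (Finset.mem_erase.mpr ⟨hb, Finset.mem_univ b⟩))
end

section
/- For a connected graph G and a graph H with v(G) ≥ s(H), the Ramsey number satisfies r(G, H) ≥ (v(G)−1)(χ(H)−1) + s(H). -/
open SimpleGraph
open scoped Classical

/-!
Split `N = (v(G) - 1)(χ(H) - 1) + s(H) - 1` vertices into `χ(H) - 1` blocks of size `v(G) - 1`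
and one block of size `s(H) - 1`, and colour an edge red exactly when it lies inside a block.
A red copy of the connected graph `G` stays inside one block, which has fewer than `v(G)`
vertices. A blue copy of `H` colours `H` properly by blocks with `χ(H)` colours, so every colour
class, in particular the one in the small block, has at least `s(H)` vertices. Ramsey's theorem
only enters to make `r(G, H)` the infimum of a nonempty set.
-/

open Finset

theorem copies_iff_isContained {α β : Type*} {G : SimpleGraph α} {R : SimpleGraph β} :
    Copies G R ↔ G ⊑ R :=
  ⟨fun ⟨f, hf, hadj⟩ => ⟨⟨⟨f, fun h => hadj h⟩, hf⟩⟩,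
    fun ⟨f⟩ => ⟨f, f.injective, fun _ _ h => f.toHom.map_adj h⟩⟩

theorem colorable_chrom {β : Type*} [Fintype β] (H : SimpleGraph β) : H.Colorable (chrom H) :=
  Nat.sInf_mem (s := {k | H.Colorable k}) ⟨_, H.colorable_of_fintype⟩

namespace SimpleGraph

theorem ncard_lt_two_pow_of_cliqueFreeOn {V : Type*} [Finite V] (R : SimpleGraph V) :
    ∀ {m p : ℕ} {s : Set V}, R.CliqueFreeOn s m → Rᶜ.CliqueFreeOn s p →
      s.ncard < 2 ^ (m + p)
  | 0, _, _, hR, _ => (hR (by simp) (isNClique_zero.2 rfl)).elim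
  | _, 0, _, _, hRc => (hRc (by simp) (isNClique_zero.2 rfl)).elim
  | m + 1, p + 1, s, hR, hRc => by
    rcases s.eq_empty_or_nonempty with rfl | ⟨a, ha⟩
    · simp
    have hcover : s ⊆ {a} ∪ (s ∩ R.neighborSet a) ∪ (s ∩ Rᶜ.neighborSet a) := by
      intro b hb
      by_cases hab : a = b
      · simp [hab]
      · by_cases hadj : R.Adj a b <;> simp [hb, hadj, hab]
    have hred := ncard_lt_two_pow_of_cliqueFreeOn R (CliqueFreeOn.of_succ _ hR ha)
      (CliqueFreeOn.subset _ Set.inter_subset_left hRc)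
    have hblue := ncard_lt_two_pow_of_cliqueFreeOn R
      (CliqueFreeOn.subset _ Set.inter_subset_left hR) (CliqueFreeOn.of_succ _ hRc ha)
    have hpow : 2 ^ (m + 1 + (p + 1)) = 2 ^ (m + (p + 1)) + 2 ^ (m + 1 + p) := by ring
    calc s.ncard ≤ ({a} ∪ (s ∩ R.neighborSet a) ∪ (s ∩ Rᶜ.neighborSet a)).ncard :=
          Set.ncard_le_ncard hcover
      _ ≤ 1 + (s ∩ R.neighborSet a).ncard + (s ∩ Rᶜ.neighborSet a).ncard := by
        grw [Set.ncard_union_le, Set.ncard_union_le, Set.ncard_singleton]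
      _ < 2 ^ (m + 1 + (p + 1)) := by omega

theorem Preconnected.eq_of_forall_adj {V X : Type*} {G : SimpleGraph V} (hG : G.Preconnected)
    {g : V → X} (hg : ∀ ⦃a b⦄, G.Adj a b → g a = g b) (a b : V) : g a = g b := by
  obtain ⟨w⟩ := hG a b
  induction w with
  | nil => rfl
  | cons h _ ih => exact (hg h).trans ih

theorem Connected.exists_card_le_card_fiber {α X ι : Type*} [Fintype α] [Fintype X]
    [DecidableEq ι] {G : SimpleGraph α} (hG : G.Connected) {p : X → ι}
    (hGR : G ⊑ ((⊤ : SimpleGraph ι).comap p)ᶜ) :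
    ∃ j, Fintype.card α ≤ #{x | p x = j} := by
  obtain ⟨f⟩ := hGR
  obtain ⟨a⟩ := hG.nonempty
  have hconst : ∀ b, p (f b) = p (f a) :=
    fun b => hG.preconnected.eq_of_forall_adj (g := fun v => p (f v))
      (fun u v huv => by simpa using (f.toHom.map_adj huv).2) b a
  refine ⟨p (f a), ?_⟩
  calc Fintype.card α = #(univ : Finset α) := card_univ.symm
    _ ≤ #{x | p x = p (f a)} :=
      card_le_card_of_injOn f (fun b _ => by simp [hconst]) f.injective.injOn

theorem Coloring.surjective_of_chrom {β : Type*} [Fintype β] {H : SimpleGraph β}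
    (C : H.Coloring (Fin (chrom H))) : Function.Surjective C :=
  le_chromaticNumber_iff_forall_surjective.1 (colorable_chrom H).chromaticNumber_eq_sInf.ge C

end SimpleGraph

theorem ramseyProp2_two_pow {α β : Type*} [Fintype α] [Fintype β]
    (G : SimpleGraph α) (H : SimpleGraph β) :
    RamseyProp2 (2 ^ (Fintype.card α + Fintype.card β)) G H := by
  intro R
  by_contra! hno
  have hR : R.CliqueFree (Fintype.card α) := cliqueFree_iff_top_free.2 fun hG =>
    hno.1 (copies_iff_isContained.2 ((IsContained.of_le le_top).trans hG))
  have hRc : Rᶜ.CliqueFree (Fintype.card β) := cliqueFree_iff_top_free.2 fun hH =>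
    hno.2 (copies_iff_isContained.2 ((IsContained.of_le le_top).trans hH))
  have := R.ncard_lt_two_pow_of_cliqueFreeOn (s := Set.univ) hR.cliqueFreeOn
    hRc.cliqueFreeOn
  rw [Set.ncard_univ, Nat.card_fin] at this
  exact lt_irrefl _ this

theorem exists_card_fiber_le {X ι : Type*} [Fintype X] [Fintype ι] [DecidableEq ι]
    (a : ι → ℕ) (h : Fintype.card X ≤ ∑ i, a i) :
    ∃ p : X → ι, ∀ i, #{x | p x = i} ≤ a i := by
  obtain ⟨e⟩ : Nonempty (X ↪ Σ i, Fin (a i)) :=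
    Function.Embedding.nonempty_of_card_le (by simpa using h)
  refine ⟨fun x => (e x).1, fun i => ?_⟩
  have hsub : ({x | (e x).1 = i} : Finset X).map e ⊆
      univ.map (Function.Embedding.sigmaMk i) := by
    intro σ hσ
    have hσi : σ.1 = i := by
      obtain ⟨x, hx, rfl⟩ := mem_map.1 hσ
      simpa using hx
    obtain ⟨j, b⟩ := σ
    obtain rfl : j = i := hσi
    exact mem_map_of_mem _ (mem_univ b)
  simpa using card_le_card hsub

theorem exists_card_fiber_le_and_card_fiber_le {X ι : Type*} [Fintype X] [Fintype ι]
    [DecidableEq ι] (j : ι) {m r : ℕ} (hrm : r ≤ m)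
    (hX : Fintype.card X ≤ (Fintype.card ι - 1) * m + r) :
    ∃ p : X → ι, (∀ i, #{x | p x = i} ≤ m) ∧ #{x | p x = j} ≤ r := by
  obtain ⟨p, hp⟩ := exists_card_fiber_le (X := X) (Function.update (fun _ => m) j r) (by
    simpa [sum_update_of_mem, card_sdiff, add_comm] using hX)
  refine ⟨p, fun i => (hp i).trans ?_, by simpa using hp j⟩
  by_cases hij : i = j <;> simp [hij, hrm]

theorem one_le_surplus {β : Type*} [Fintype β] (H : SimpleGraph β) (hχ : chrom H ≠ 0) :
    1 ≤ surplus H := by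
  obtain ⟨C⟩ := colorable_chrom H
  refine le_csInf ⟨_, C, ⟨0, Nat.pos_of_ne_zero hχ⟩, rfl⟩ ?_
  rintro _ ⟨C, i, rfl⟩
  obtain ⟨v, hv⟩ := C.surjective_of_chrom i
  exact card_pos.2 ⟨v, by simpa using hv⟩

theorem surplus_le_card_fiber {β X : Type*} [Fintype β] [Fintype X] {H : SimpleGraph β}
    {p : X → Fin (chrom H)} (hH : H ⊑ (⊤ : SimpleGraph (Fin (chrom H))).comap p)
    (j : Fin (chrom H)) : surplus H ≤ #{x | p x = j} := by
  obtain ⟨f⟩ := hH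
  let C : H.Coloring (Fin (chrom H)) :=
    Coloring.mk (fun v => p (f v)) fun hadj => by simpa using f.toHom.map_adj hadj
  calc surplus H ≤ #{v | C v = j} := Nat.sInf_le ⟨C, j, rfl⟩
    _ ≤ #{x | p x = j} :=
      card_le_card_of_injOn f (fun _ hv => mem_filter.2 ⟨mem_univ _, (mem_filter.1 hv).2⟩)
        f.injective.injOn

theorem not_ramseyProp2_of_lt {α β : Type*} [Fintype α] [Fintype β] {G : SimpleGraph α}
    {H : SimpleGraph β} (hG : G.Connected) (hs : surplus H ≤ Fintype.card α)
    (hχ : chrom H ≠ 0) {N : ℕ} (hN : N < (Fintype.card α - 1) * (chrom H - 1) + surplus H) :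
    ¬RamseyProp2 N G H := by
  have hs₁ := one_le_surplus H hχ
  have hα : 0 < Fintype.card α := Fintype.card_pos_iff.2 hG.nonempty
  let j : Fin (chrom H) := ⟨0, Nat.pos_of_ne_zero hχ⟩
  obtain ⟨p, hp, hpj⟩ := exists_card_fiber_le_and_card_fiber_le (X := Fin N) j
    (m := Fintype.card α - 1) (r := surplus H - 1) (by omega)
    (by rw [Fintype.card_fin, Fintype.card_fin, Nat.mul_comm]; omega)
  intro hR
  -- the blocks are the fibres of `p`; blue is the complete multipartite graph `⊤.comap p`
  rcases hR ((⊤ : SimpleGraph (Fin (chrom H))).comap p)ᶜ with hGR | hHR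
  · obtain ⟨i, hi⟩ := hG.exists_card_le_card_fiber (copies_iff_isContained.1 hGR)
    have := hp i
    omega
  · rw [compl_compl] at hHR
    have := surplus_le_card_fiber (copies_iff_isContained.1 hHR) j
    omega

theorem stmt3 {α β : Type*} [Fintype α] [Fintype β]
    (G : SimpleGraph α) (H : SimpleGraph β) (hconn : G.Connected)
    (h : surplus H ≤ Fintype.card α) :
    (Fintype.card α - 1) * (chrom H - 1) + surplus H ≤ ramsey2 G H := by
  by_cases hχ : chrom H = 0
  · have hsurplus : surplus H = 0 := Nat.sInf_eq_zero.2 <| Or.inr <|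
      Set.eq_empty_of_forall_notMem fun _ ⟨_, i, _⟩ => absurd i.isLt (by omega)
    simp [hχ, hsurplus]
  · exact le_csInf ⟨_, ramseyProp2_two_pow G H⟩ fun N hN =>
      not_lt.1 fun hlt => not_ramseyProp2_of_lt hconn h hχ hlt hN
end

section
/- For every tree T on n vertices and every m ≥ 1, the Ramsey number satisfies r(T, K_m) = (n−1)(m−1) + 1. -/
open SimpleGraph
open scoped Classical

/-!
Upper bound (Chvátal), by induction on `m`: in a graph on `(n-1)(m-1)+1` vertices, either some
vertex `x` has more than `(n-1)(m-2)` non-neighbours, and the induction hypothesis applied to them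
gives a copy of `T` or an independent `(m-1)`-set that `x` extends; or every vertex has at least
`n-1` neighbours, and then `T` embeds greedily, one leaf at a time.

Lower bound: `m-1` disjoint red cliques of size `n-1` contain no connected graph on `n` vertices,
and their blue complement is `(m-1)`-partite, so it contains no `K_m`.
-/

open Finset

theorem SimpleGraph.IsContained.copies {α β : Type*} {H : SimpleGraph α} {G : SimpleGraph β}
    (h : H ⊑ G) : Copies H G :=
  let ⟨f⟩ := h
  ⟨f, f.injective, fun _ _ hab => f.toHom.map_adj hab⟩

namespace SimpleGraph

variable {V W : Type*}

theorem Reachable.apply_eq_of_forall_adj {G : SimpleGraph V} {β : Type*} {g : V → β}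
    (hg : ∀ a b, G.Adj a b → g a = g b) {u v : V} (h : G.Reachable u v) : g u = g v := by
  obtain ⟨p⟩ := h
  induction p with
  | nil => rfl
  | cons hadj _ ih => exact (hg _ _ hadj).trans ih

theorem IsTree.induce_compl_singleton_of_degree_eq_one {T : SimpleGraph V} (hT : T.IsTree)
    {v : V} [Fintype (T.neighborSet v)] (hv : T.degree v = 1) : (T.induce {v}ᶜ).IsTree :=
  ⟨hT.connected.induce_compl_singleton_of_degree_eq_one hv, hT.isAcyclic.induce _⟩

theorem exists_copy_of_copy_induce_compl_singleton {T : SimpleGraph V} {G : SimpleGraph W}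
    {v u : V} (hvu : T.Adj v u) (huniq : ∀ a, T.Adj v a → a = u)
    (f' : (T.induce {v}ᶜ).Copy G) {w : W} (hw : w ∉ Set.range f')
    (hadj : G.Adj (f' ⟨u, hvu.ne'⟩) w) :
    ∃ f : T.Copy G, Set.range f ⊆ insert w (Set.range f') := by
  classical
  let g : V → W := fun a => if h : a = v then w else f' ⟨a, h⟩
  have hgv : g v = w := dif_pos rfl
  have hg : ∀ a (h : a ≠ v), g a = f' ⟨a, h⟩ := fun a h => dif_neg h
  have hgu : g u = f' ⟨u, hvu.ne'⟩ := hg u hvu.ne'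
  have map_adj : ∀ {a b}, T.Adj a b → G.Adj (g a) (g b) := by
    intro a b hab
    by_cases ha : a = v <;> by_cases hb : b = v
    · exact absurd (ha.trans hb.symm) hab.ne
    · subst ha; rw [huniq b hab, hgv, hgu]; exact hadj.symm
    · subst hb; rw [huniq a hab.symm, hgv, hgu]; exact hadj
    · rw [hg a ha, hg b hb]; exact f'.toHom.map_adj (show T.Adj a b from hab)
  have injective : Function.Injective g := by
    intro a b hab
    by_cases ha : a = v <;> by_cases hb : b = v
    · rw [ha, hb]
    · rw [ha, hgv, hg b hb] at hab; exact absurd ⟨_, hab.symm⟩ hw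
    · rw [hb, hgv, hg a ha] at hab; exact absurd ⟨_, hab⟩ hw
    · rw [hg a ha, hg b hb] at hab; exact congrArg Subtype.val (f'.injective hab)
  refine ⟨⟨⟨g, map_adj⟩, injective⟩, ?_⟩
  rintro _ ⟨a, rfl⟩
  by_cases ha : a = v
  · exact .inl (by subst ha; exact hgv)
  · exact .inr ⟨_, (hg a ha).symm⟩

theorem IsTree.exists_copy_forall_mem [Fintype V] {T : SimpleGraph V} (hT : T.IsTree)
    (G : SimpleGraph W) {S : Finset W} (hS : S.Nonempty)
    (hdeg : ∀ x ∈ S, Fintype.card V - 1 ≤ #{y ∈ S | G.Adj x y}) :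
    ∃ f : T.Copy G, ∀ a, f a ∈ S := by
  classical
  induction hk : Fintype.card V generalizing V with
  | zero => exact absurd hk (Fintype.card_pos_iff.2 hT.connected.nonempty).ne'
  | succ k ih =>
    rcases subsingleton_or_nontrivial V with hV | hV
    · obtain ⟨s, hs⟩ := hS
      exact ⟨⟨⟨fun _ => s, fun hab => absurd (Subsingleton.elim _ _) hab.ne⟩,
        fun _ _ _ => Subsingleton.elim _ _⟩, fun _ => hs⟩
    obtain ⟨v, hv⟩ := hT.exists_vert_degree_one_of_nontrivial
    obtain ⟨u, hvu, huniq⟩ := degree_eq_one_iff_existsUnique_adj.1 hv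
    have hcard : Fintype.card ({v}ᶜ : Set V) = k := by
      rw [Fintype.card_compl_set, hk]; simp
    obtain ⟨f', hf'S⟩ := ih (hT.induce_compl_singleton_of_degree_eq_one hv)
      (fun x hx => (Nat.sub_le_sub_right (by omega) 1).trans (hdeg x hx)) hcard
    set x₀ := f' ⟨u, hvu.ne'⟩
    -- `x₀` has at least `k` neighbours in `S`, while the image of `f'` has `k` vertices, one of
    -- which is `x₀` itself.
    obtain ⟨w, hwA, hwB⟩ := exists_mem_notMem_of_card_lt_card
      (s := univ.image f') (t := insert x₀ {y ∈ S | G.Adj x₀ y}) (by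
        rw [card_image_of_injective (f := ⇑f') _ f'.injective, card_univ, hcard,
          card_insert_of_notMem (by simp)]
        have := hdeg x₀ (hf'S _)
        omega)
    have hw : w ∈ S ∧ G.Adj x₀ w := by
      rcases mem_insert.1 hwA with rfl | hw
      · exact absurd (mem_image_of_mem _ (mem_univ _)) hwB
      · exact mem_filter.1 hw
    obtain ⟨f, hf⟩ := exists_copy_of_copy_induce_compl_singleton hvu huniq f'
      (fun ⟨a, ha⟩ => hwB (ha ▸ mem_image_of_mem _ (mem_univ a))) hw.2
    refine ⟨f, fun a => ?_⟩
    rcases hf ⟨a, rfl⟩ with h | ⟨b, hb⟩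
    · exact h ▸ hw.1
    · exact hb ▸ hf'S b

theorem IsTree.isContained_or_exists_isNClique_compl [Fintype V] {T : SimpleGraph V}
    (hT : T.IsTree) (G : SimpleGraph W) (m : ℕ) {S : Finset W}
    (hS : (Fintype.card V - 1) * m < #S) : T ⊑ G ∨ ∃ I ⊆ S, Gᶜ.IsNClique (m + 1) I := by
  induction m generalizing S with
  | zero =>
    obtain ⟨s, hs⟩ := card_pos.1 (by omega : 0 < #S)
    exact .inr ⟨{s}, singleton_subset_iff.2 hs, isNClique_one.2 ⟨s, rfl⟩⟩
  | succ m ih =>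
    by_cases h : ∃ x ∈ S, (Fintype.card V - 1) * m < #{y ∈ S | Gᶜ.Adj x y}
    · obtain ⟨x, hx, hcard⟩ := h
      refine (ih hcard).imp_right fun ⟨I, hIS, hI⟩ => ⟨insert x I, ?_, ?_⟩
      · exact insert_subset hx (hIS.trans (filter_subset _ _))
      · exact hI.insert fun b hb => (mem_filter.1 (hIS hb)).2
    · push Not at h
      have hdeg : ∀ x ∈ S, Fintype.card V - 1 ≤ #{y ∈ S | G.Adj x y} := by
        intro x hx
        have hsplit : #{y ∈ S | ¬ G.Adj x y} ≤ #{y ∈ S | Gᶜ.Adj x y} + 1 := by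
          refine (card_le_card fun y hy => ?_).trans (card_insert_le x _)
          rw [mem_filter] at hy
          by_cases hxy : x = y
          · exact hxy ▸ mem_insert_self _ _
          · exact mem_insert_of_mem (mem_filter.2 ⟨hy.1, (compl_adj G x y).2 ⟨hxy, hy.2⟩⟩)
        have := card_filter_add_card_filter_not (s := S) fun y => G.Adj x y
        have := h x hx
        rw [Nat.mul_succ] at hS
        omega
      obtain ⟨f, -⟩ := hT.exists_copy_forall_mem G (card_pos.1 (by omega : 0 < #S)) hdeg
      exact .inl ⟨f⟩

theorem ramseyProp2_of_isTree [Fintype V] {T : SimpleGraph V} (hT : T.IsTree) (k : ℕ) :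
    RamseyProp2 ((Fintype.card V - 1) * k + 1) T (⊤ : SimpleGraph (Fin (k + 1))) := by
  intro R
  refine (hT.isContained_or_exists_isNClique_compl R k (S := univ) (by simp)).imp
    IsContained.copies fun ⟨I, _, hI⟩ => ?_
  exact ((not_cliqueFree_iff_top_isContained _).1 hI.not_cliqueFree).copies

theorem not_ramseyProp2_of_connected {α : Type*} [Fintype α] {H : SimpleGraph α}
    (hH : H.Connected) {p q N : ℕ} (hp : p < Fintype.card α) (hN : N ≤ q * p) :
    ¬ RamseyProp2 N H (⊤ : SimpleGraph (Fin (q + 1))) := by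
  obtain ⟨e⟩ : Nonempty (Fin N ↪ Fin q × Fin p) :=
    Function.Embedding.nonempty_of_card_le (by simpa using hN)
  intro h
  -- The red graph is the disjoint union of the cliques on the fibres of `Prod.fst ∘ e`.
  rcases h ((⊤ : SimpleGraph (Fin q)).comap (Prod.fst ∘ e))ᶜ with
    ⟨f, hf, hadj⟩ | ⟨f, hf, hadj⟩
  · have hfst : ∀ a b, (e (f a)).1 = (e (f b)).1 := fun a b =>
      (hH.preconnected a b).apply_eq_of_forall_adj fun a b hab => by simpa using (hadj hab).2
    have hinj : Function.Injective fun a => (e (f a)).2 := fun a b hab =>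
      hf (e.injective (Prod.ext (hfst a b) hab))
    exact (Fintype.card_le_of_injective _ hinj).not_gt (by simpa using hp)
  · have hinj : Function.Injective fun i => (e (f i)).1 := fun i j hij => by
      by_contra hne
      simpa [hij] using hadj ((top_adj _ _).2 hne)
    simpa using Fintype.card_le_of_injective _ hinj

end SimpleGraph

theorem ramsey2_eq_succ {α β : Type*} {G₁ : SimpleGraph α} {G₂ : SimpleGraph β} {N : ℕ}
    (h : RamseyProp2 (N + 1) G₁ G₂) (h' : ∀ M ≤ N, ¬ RamseyProp2 M G₁ G₂) :
    ramsey2 G₁ G₂ = N + 1 :=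
  le_antisymm (Nat.sInf_le h) (le_csInf ⟨_, h⟩ fun M hM => by
    by_contra hlt
    exact h' M (by omega) hM)

theorem stmt4 (n m : ℕ) (hm : 1 ≤ m) (T : SimpleGraph (Fin n)) (hT : T.IsTree) :
    ramsey2 T (⊤ : SimpleGraph (Fin m)) = (n - 1) * (m - 1) + 1 := by
  obtain ⟨k, rfl⟩ : ∃ k, m = k + 1 := ⟨m - 1, by omega⟩
  have hn : n - 1 < Fintype.card (Fin n) := by
    simpa [Fin.pos_iff_nonempty] using hT.connected.nonempty
  rw [Nat.add_sub_cancel]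
  refine ramsey2_eq_succ (by simpa using ramseyProp2_of_isTree hT k) fun N hN => ?_
  exact not_ramseyProp2_of_connected hT.connected hn (hN.trans (Nat.mul_comm _ _).le)
end

section
/- Fix n, m, t and N with (t+1)(n−1)(m−1)+1 ≤ N ≤ (t+2)(n−1)(m−1). There exists a graph G on N vertices with minimum degree δ(G) = N − ⌈((t+1)/(t+2))·⌈N/(m−1)⌉⌉ − 1 and a red-blue coloring of E(G) with no red tree on n vertices of any shape and no blue K_m. -/
open SimpleGraph
open scoped Classical

/-!
Label vertex `w` by the residues `w % k` (its part, `k = m - 1`) and `w % (k (t + 2))` (its red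
clique); the second refines the first. Blue edges join distinct parts, so the blue graph is
`k`-colourable and has no `K_m`. The red components are the cliques, each of size at most
`⌈N / (k (t + 2))⌉ ≤ n - 1`, so no tree on `n` vertices is red. A vertex is non-adjacent exactly to
the rest of its part outside its clique. In a part of size `P` the cliques are the residues of the
index modulo `t + 2`, so this is at most `P - ⌊P / (t + 2)⌋`; the bound is monotone in `P`, hence
maximal for `P = ⌈N / k⌉`, and it is attained by the vertex `k (t + 1)`.
-/

open Finset

lemma Copies.mono {α β : Type*} {H : SimpleGraph α} {G G' : SimpleGraph β} (h : Copies H G)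
    (hG : G ≤ G') : Copies H G' :=
  let ⟨f, hf, hadj⟩ := h
  ⟨f, hf, fun _ _ hab => hG (hadj hab)⟩

namespace SimpleGraph

variable {V α β : Type*}

def fiberCliques (q : V → β) : SimpleGraph V := ((⊤ : SimpleGraph β).comap q)ᶜ

@[simp] lemma fiberCliques_adj {q : V → β} {a b : V} :
    (fiberCliques q).Adj a b ↔ a ≠ b ∧ q a = q b := by
  simp [fiberCliques]

lemma Reachable.eq_of_fiberCliques {q : V → β} {a b : V} (h : (fiberCliques q).Reachable a b) :
    q a = q b := by
  obtain ⟨w⟩ := h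
  induction w with
  | nil => rfl
  | cons hadj _ ih => exact (fiberCliques_adj.1 hadj).2.trans ih

lemma not_copies_fiberCliques [Fintype V] [DecidableEq β] {γ : Type*} [Fintype γ]
    {H : SimpleGraph γ} (hH : H.Connected) {q : V → β}
    (hq : ∀ v, #{w | q w = q v} < Fintype.card γ) : ¬ Copies H (fiberCliques q) := by
  rintro ⟨f, hf, hadj⟩
  obtain ⟨c⟩ := hH.nonempty
  let φ : H →g fiberCliques q := ⟨f, fun h => hadj h⟩
  refine (hq (f c)).not_ge (card_le_card_of_injOn f (fun x _ => ?_) hf.injOn)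
  simp only [coe_filter, mem_univ, true_and, Set.mem_ofPred_eq]
  exact ((hH.preconnected x c).map φ).eq_of_fiberCliques

lemma not_copies_top_comap {m : ℕ} {p : V → α} (S : Finset α) (hS : ∀ v, p v ∈ S)
    (hm : #S < m) : ¬ Copies (⊤ : SimpleGraph (Fin m)) ((⊤ : SimpleGraph α).comap p) := by
  rintro ⟨f, -, hadj⟩
  have hinj : Function.Injective (p ∘ f) := fun a b hab => by_contra fun hne => hadj hne hab
  simpa using
    (card_le_card_of_injOn (s := univ) (p ∘ f) (fun a _ => hS _) hinj.injOn).trans_lt hm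

/-- `(⊤ : SimpleGraph α).comap p` is complete multipartite with parts the fibres of `p`. -/
def multipartiteWithCliques (p : V → α) (q : V → β) : SimpleGraph V :=
  fiberCliques q ⊔ (⊤ : SimpleGraph α).comap p

lemma degree_multipartiteWithCliques_add [Fintype V] [DecidableEq α] [DecidableEq β]
    (p : V → α) (q : V → β) [DecidableRel (multipartiteWithCliques p q).Adj] (v : V) :
    (multipartiteWithCliques p q).degree v + #{w | p w = p v ∧ q w ≠ q v} =
      Fintype.card V - 1 := by
  have hcompl : (multipartiteWithCliques p q)ᶜ.degree v = #{w | p w = p v ∧ q w ≠ q v} := by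
    rw [← card_neighborFinset_eq_degree, neighborFinset_eq_filter]
    congr 1
    ext w
    simp only [compl_adj, multipartiteWithCliques, sup_adj, fiberCliques_adj, comap_adj, top_adj,
      mem_filter, mem_univ, true_and]
    grind
  have := (multipartiteWithCliques p q).degree_compl v
  have := (multipartiteWithCliques p q).degree_lt_card_verts v
  omega

lemma minDegree_eq_degree_of_forall_le [Fintype V] {G : SimpleGraph V} [DecidableRel G.Adj]
    {v : V} (h : ∀ w, G.degree v ≤ G.degree w) : G.minDegree = G.degree v :=
  have : Nonempty V := ⟨v⟩
  (G.minDegree_le_degree v).antisymm (G.le_minDegree_of_forall_le_degree _ h)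

end SimpleGraph

lemma Int.ceil_natCast_div_natCast_eq_ceilDiv (n d : ℕ) : ⌈(n / d : ℚ)⌉ = (n ⌈/⌉ d : ℕ) := by
  rcases Nat.eq_zero_or_pos d with rfl | hd
  · simp
  have hd' : (0 : ℚ) < d := by exact_mod_cast hd
  have hle : n ≤ d * (n ⌈/⌉ d) := le_smul_ceilDiv hd
  have hlt : d * (n ⌈/⌉ d) < n + d := by
    rw [Nat.ceilDiv_eq_add_pred_div]
    have := Nat.div_add_mod (n + d - 1) d
    omega
  have hle' : (n : ℚ) ≤ d * (n ⌈/⌉ d : ℕ) := by exact_mod_cast hle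
  have hlt' : (d : ℚ) * (n ⌈/⌉ d : ℕ) < n + d := by exact_mod_cast hlt
  rw [Int.ceil_eq_iff, Int.cast_natCast, sub_lt_iff_lt_add, div_add_one hd'.ne', lt_div_iff₀ hd',
    div_le_iff₀ hd']
  constructor <;> linarith

lemma Int.ceil_add_one_div_add_two_mul (t c : ℕ) :
    ⌈((t + 1 : ℚ) / (t + 2)) * c⌉ = ((c - c / (t + 2) : ℕ) : ℤ) := by
  have hfrac : ((t + 1 : ℚ) / (t + 2)) * c = (c : ℤ) + -((c : ℚ) / ((t + 2 : ℕ) : ℚ)) := by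
    push_cast
    field_simp
    ring
  rw [hfrac, Int.ceil_intCast_add, Int.ceil_neg, Rat.floor_natCast_div_natCast,
    Nat.cast_sub (Nat.div_le_self _ _)]
  push_cast
  ring

lemma Nat.monotone_sub_div (s : ℕ) : Monotone fun x : ℕ => x - x / s := by
  refine monotone_nat_of_le_succ fun x => ?_
  have hsucc : (x + 1) / s ≤ x / s + 1 := by
    rw [Nat.succ_div]
    split_ifs <;> omega
  have := Nat.div_le_self x s
  show x - x / s ≤ x + 1 - (x + 1) / s
  omega

lemma Nat.ceilDiv_div_le_ceilDiv_sub_mul (x k s j : ℕ) (hj : j < s) :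
    x ⌈/⌉ k / s ≤ (x - k * j) ⌈/⌉ (k * s) := by
  rw [Nat.ceilDiv_eq_add_pred_div, Nat.ceilDiv_eq_add_pred_div, Nat.div_div_eq_div_mul]
  refine Nat.div_le_div_right ?_
  have : k * j + k ≤ k * s := by rw [← Nat.mul_succ]; exact Nat.mul_le_mul_left k hj
  omega

lemma Nat.ceilDiv_sub_mul_pred (x k s : ℕ) (h : k * (s - 1) ≤ x) (hs : 0 < s) :
    (x - k * (s - 1)) ⌈/⌉ (k * s) = x ⌈/⌉ k / s := by
  rw [Nat.ceilDiv_eq_add_pred_div, Nat.ceilDiv_eq_add_pred_div, Nat.div_div_eq_div_mul]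
  congr 1
  have : k * (s - 1) + k = k * s := by
    rw [← Nat.mul_succ, Nat.succ_eq_add_one, Nat.sub_add_cancel hs]
  omega

namespace Fin

lemma card_filter_mod_eq (N d : ℕ) (hd : 0 < d) (v : Fin N) :
    #{w : Fin N | (w : ℕ) % d = v % d} = (N - v % d) ⌈/⌉ d := by
  have hcount := Nat.count_modEq_card_eq_ceil N hd v
  rw [← Nat.cast_sub ((Nat.mod_le _ _).trans v.isLt.le), Int.ceil_natCast_div_natCast_eq_ceilDiv,
    Nat.cast_inj, Nat.count_eq_card_filter_range, ← Nat.Iio_eq_range, ← Fin.map_valEmbedding_univ,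
    filter_map, card_map] at hcount
  exact hcount

lemma card_filter_mod_eq_le (N d : ℕ) (hd : 0 < d) (v : Fin N) :
    #{w : Fin N | (w : ℕ) % d = v % d} ≤ N ⌈/⌉ d :=
  card_filter_mod_eq N d hd v ▸ (gc_mul_ceilDiv hd).monotone_l (Nat.sub_le _ _)

lemma card_filter_mod_eq_and_mod_ne (N k s : ℕ) (hk : 0 < k) (hs : 0 < s) (v : Fin N) :
    #{w : Fin N | (w : ℕ) % k = v % k ∧ (w : ℕ) % (k * s) ≠ v % (k * s)} =
      (N - v % k) ⌈/⌉ k - (N - v % (k * s)) ⌈/⌉ (k * s) := by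
  have hsplit := card_filter_add_card_filter_not (s := {w : Fin N | (w : ℕ) % k = v % k})
    fun w : Fin N => (w : ℕ) % (k * s) = v % (k * s)
  have hfine : ({w : Fin N | (w : ℕ) % k = v % k} : Finset (Fin N)).filter
      (fun w : Fin N => (w : ℕ) % (k * s) = v % (k * s)) =
      ({w : Fin N | (w : ℕ) % (k * s) = v % (k * s)} : Finset (Fin N)) := by
    ext w
    simp only [mem_filter, mem_univ, true_and, and_iff_right_iff_imp]
    intro h
    rw [← Nat.mod_mul_right_mod w k s, h, Nat.mod_mul_right_mod]
  rw [hfine, filter_filter, card_filter_mod_eq N k hk,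
    card_filter_mod_eq N _ (Nat.mul_pos hk hs)] at hsplit
  rw [← hsplit]
  simp only [ne_eq, Nat.add_sub_cancel_left]

lemma card_filter_mod_eq_and_mod_ne_le (N k s : ℕ) (hk : 0 < k) (hs : 0 < s) (v : Fin N) :
    #{w : Fin N | (w : ℕ) % k = v % k ∧ (w : ℕ) % (k * s) ≠ v % (k * s)} ≤
      N ⌈/⌉ k - N ⌈/⌉ k / s := by
  rw [card_filter_mod_eq_and_mod_ne N k s hk hs]
  have hdecomp : (v : ℕ) % (k * s) = v % k + k * (v / k % s) := by
    rw [← Nat.mod_mul_right_div_self, ← Nat.mod_mul_right_mod (v : ℕ) k s, Nat.add_comm,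
      Nat.div_add_mod]
  have hP : (N - v % k) ⌈/⌉ k ≤ N ⌈/⌉ k := (gc_mul_ceilDiv hk).monotone_l (Nat.sub_le _ _)
  have hQ := Nat.ceilDiv_div_le_ceilDiv_sub_mul (N - v % k) k s (v / k % s) (Nat.mod_lt _ hs)
  rw [Nat.sub_sub, ← hdecomp] at hQ
  have := Nat.monotone_sub_div s hP
  simp only at this
  omega

lemma card_filter_mod_eq_and_mod_ne_eq (N k s : ℕ) (hk : 0 < k) (hs : 0 < s) (v : Fin N)
    (hv : (v : ℕ) = k * (s - 1)) :
    #{w : Fin N | (w : ℕ) % k = v % k ∧ (w : ℕ) % (k * s) ≠ v % (k * s)} =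
      N ⌈/⌉ k - N ⌈/⌉ k / s := by
  have hlt : k * (s - 1) < k * s := Nat.mul_lt_mul_of_pos_left (Nat.sub_lt hs Nat.one_pos) hk
  rw [card_filter_mod_eq_and_mod_ne N k s hk hs, hv, Nat.mod_eq_of_lt hlt, Nat.mul_mod_right,
    Nat.sub_zero, Nat.ceilDiv_sub_mul_pred N k s (hv ▸ v.isLt.le) hs]

end Fin

lemma minDegree_multipartiteWithCliques_mod_add (N k s : ℕ) (hk : 0 < k) (hs : 0 < s)
    (hN : k * (s - 1) < N) :
    (multipartiteWithCliques (fun w : Fin N => (w : ℕ) % k) fun w => (w : ℕ) % (k * s)).minDegree +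
      (N ⌈/⌉ k - N ⌈/⌉ k / s) = N - 1 := by
  have hdeg : ∀ v : Fin N,
      (multipartiteWithCliques (fun w : Fin N => (w : ℕ) % k) fun w => (w : ℕ) % (k * s)).degree v +
        #{w : Fin N | (w : ℕ) % k = v % k ∧ (w : ℕ) % (k * s) ≠ v % (k * s)} = N - 1 :=
    fun v => by simpa only [Fintype.card_fin] using degree_multipartiteWithCliques_add _ _ v
  have hD₀ := Fin.card_filter_mod_eq_and_mod_ne_eq N k s hk hs ⟨_, hN⟩ rfl
  rw [minDegree_eq_degree_of_forall_le (v := ⟨_, hN⟩) fun w => by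
    have := hdeg ⟨_, hN⟩
    have := hdeg w
    have := Fin.card_filter_mod_eq_and_mod_ne_le N k s hk hs w
    omega]
  have := hdeg ⟨_, hN⟩
  omega

theorem stmt13_general (n m t N : ℕ)
    (hN1 : (t + 1) * (n - 1) * (m - 1) + 1 ≤ N) (hN2 : N ≤ (t + 2) * (n - 1) * (m - 1)) :
    ∃ G : SimpleGraph (Fin N),
      (G.minDegree : ℤ) =
        (N : ℤ) - ⌈((t + 1 : ℚ) / (t + 2)) * (⌈(N : ℚ) / ((m : ℚ) - 1)⌉ : ℚ)⌉ - 1 ∧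
      ∃ R ≤ G, (∀ T : SimpleGraph (Fin n), T.IsTree → ¬ Copies T R) ∧
        ¬ Copies (⊤ : SimpleGraph (Fin m)) (G \ R) := by
  obtain ⟨hn, hk⟩ : 0 < n - 1 ∧ 0 < m - 1 :=
    CanonicallyOrderedAdd.mul_pos.1 (by nlinarith : 0 < (n - 1) * (m - 1))
  set k := m - 1 with hk_def
  have hM : 0 < k * (t + 2) := Nat.mul_pos hk (Nat.succ_pos _)
  have hv₀ : k * (t + 2 - 1) < N := by
    have : (t + 1) * 1 * k ≤ (t + 1) * (n - 1) * k := by gcongr; omega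
    show k * (t + 1) < N
    linarith
  have hmin := minDegree_multipartiteWithCliques_mod_add N k (t + 2) hk (Nat.succ_pos _) hv₀
  refine ⟨multipartiteWithCliques (fun w : Fin N => (w : ℕ) % k) fun w => (w : ℕ) % (k * (t + 2)),
    ?_, fiberCliques fun w : Fin N => (w : ℕ) % (k * (t + 2)), le_sup_left, ?_, ?_⟩
  · have hcast : (m : ℚ) - 1 = (k : ℕ) := by rw [hk_def, Nat.cast_pred (by omega)]
    rw [hcast, Int.ceil_natCast_div_natCast_eq_ceilDiv, Int.cast_natCast,
      Int.ceil_add_one_div_add_two_mul]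
    omega
  · have hmax : N ⌈/⌉ (k * (t + 2)) ≤ n - 1 :=
      (ceilDiv_le_iff_le_mul hM).2 (by rw [hk_def]; linarith)
    exact fun T hT => not_copies_fiberCliques hT.connected fun v =>
      (Fin.card_filter_mod_eq_le N _ hM v).trans_lt (by rw [Fintype.card_fin]; omega)
  · exact fun h => not_copies_top_comap (range k) (fun v => mem_range.2 (Nat.mod_lt _ hk))
      (by rw [card_range]; omega) (h.mono (sdiff_le_iff.2 le_rfl))

theorem stmt13 (n m t N : ℕ) (hn : 1 ≤ n) (hm : 1 ≤ m)
    (hN1 : (t + 1) * (n - 1) * (m - 1) + 1 ≤ N) (hN2 : N ≤ (t + 2) * (n - 1) * (m - 1)) :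
    ∃ G : SimpleGraph (Fin N),
      (G.minDegree : ℤ) =
        (N : ℤ) - ⌈((t + 1 : ℚ) / (t + 2)) * (⌈(N : ℚ) / ((m : ℚ) - 1)⌉ : ℚ)⌉ - 1 ∧
      ∃ R ≤ G, (∀ T : SimpleGraph (Fin n), T.IsTree → ¬ Copies T R) ∧
        ¬ Copies (⊤ : SimpleGraph (Fin m)) (G \ R) :=
  stmt13_general n m t N hN1 hN2
end
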